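/- Let e, f, g be formal power series in variables s, q (and possibly other variables) over a commutative ring, and suppose F satisfies the functional equation F(s) = x·e(s) + x·f(s)·F(1) + x·g(s)·F(qs), where F(1) means setting s=1 and F(qs) means replacing s by qs. Define E(s) = Σ_{n≥0} x^{n+1} g(s)g(sq)⋯g(sq^{n-1}) e(sq^n) and G(s) = Σ_{n≥0} x^{n+1} g(s)g(sq)⋯g(sq^{n-1}) f(sq^n). Then F(s) = (E(s) + E(1)G(s) − E(s)G(1)) / (1 − G(1)). -/

import Mathlib

noncomputable section

variable (R : Type*) [CommRing R]

/-- The coefficient ring `R[[q]][s]`: polynomials in `s` over formal power series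
in `q`.  Power series in `x` over this ring model series in `x, q, s` for which
substitutions `s ↦ 1` and `s ↦ q^i s` make sense. -/
abbrev QS := Polynomial (PowerSeries R)

/-- Substitution `s ↦ v` on the coefficient ring. -/
def subS (v : QS R) : QS R →+* QS R := (Polynomial.aeval v).toRingHom

/-- Substitution `s ↦ q^i s`. -/
def sigma (i : ℕ) : QS R →+* QS R :=
  subS R (Polynomial.C (PowerSeries.X ^ i) * Polynomial.X)

/-- Given `g` and `e`, the series `Σ_{n≥0} x^{n+1} g(s)g(sq)⋯g(sq^{n-1}) e(sq^n)`. -/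
def Eser (g e : QS R) : PowerSeries (QS R) :=
  PowerSeries.mk fun m =>
    match m with
    | 0 => 0
    | n + 1 => (∏ i ∈ Finset.range n, sigma R i g) * sigma R n e


/-! Subtracting `G(s)·F(1)` from `F(s)` kills the unknown `F(1)`: since `s ↦ qs` fixes `F(1)`,
the difference solves the same recursion `H = x·e + x·g·H(qs)` as `E`, and this recursion has a
unique solution because `x` raises the order. So `F(s) = E(s) + G(s)F(1)`; setting `s = 1`
gives `(1 - G(1))F(1) = E(1)`, and eliminating `F(1)` yields the formula. -/

lemma subS_subS (v w a : QS R) : subS R v (subS R w a) = subS R (subS R v w) a := by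
  simp only [subS, AlgHom.toRingHom_eq_coe, RingHom.coe_coe, ← Polynomial.comp_eq_aeval,
    Polynomial.aeval_comp]

lemma subS_comp_subS_one (v : QS R) : (subS R v).comp (subS R 1) = subS R 1 :=
  RingHom.ext fun a => by rw [RingHom.comp_apply, subS_subS, map_one]

lemma map_subS_map_subS_one (v : QS R) (H : PowerSeries (QS R)) :
    PowerSeries.map (subS R v) (PowerSeries.map (subS R 1) H) = PowerSeries.map (subS R 1) H := by
  rw [← RingHom.comp_apply, ← PowerSeries.map_comp, subS_comp_subS_one]

lemma sigma_one_sigma (i : ℕ) (a : QS R) : sigma R 1 (sigma R i a) = sigma R (i + 1) a := by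
  simp only [sigma, subS_subS]
  congr 2
  simp [subS, pow_succ, mul_assoc]

lemma sigma_zero (a : QS R) : sigma R 0 a = a := by
  simp [sigma, subS]

theorem PowerSeries.eq_zero_of_eq_X_mul_C_mul_map {A : Type*} [Semiring A] (φ : A →+* A)
    (c : A) {D : PowerSeries A} (hD : D = X * C c * map φ D) : D = 0 := by
  ext n
  induction n with
  | zero => rw [hD]; simp [mul_assoc]
  | succ n ih => rw [hD, mul_assoc, coeff_succ_X_mul, coeff_C_mul, coeff_map, ih]; simp

lemma Eser_eq (g e : QS R) :
    Eser R g e = PowerSeries.X * PowerSeries.C e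
      + PowerSeries.X * PowerSeries.C g * PowerSeries.map (sigma R 1) (Eser R g e) := by
  refine PowerSeries.ext fun n => ?_
  rcases n with _ | n
  · simp [Eser]
  rw [map_add, mul_assoc, PowerSeries.coeff_succ_X_mul, PowerSeries.coeff_succ_X_mul,
    PowerSeries.coeff_C_mul, PowerSeries.coeff_map, PowerSeries.coeff_C]
  rcases n with _ | n
  · simp [Eser, sigma_zero]
  · simp only [Eser, PowerSeries.coeff_mk, map_mul, map_prod, sigma_one_sigma,
      Finset.prod_range_succ', sigma_zero, Nat.succ_ne_zero, if_false]
    ring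

lemma eq_Eser_of_eq (g e : QS R) {H : PowerSeries (QS R)}
    (hH : H = PowerSeries.X * PowerSeries.C e
      + PowerSeries.X * PowerSeries.C g * PowerSeries.map (sigma R 1) H) :
    H = Eser R g e := by
  refine sub_eq_zero.mp (PowerSeries.eq_zero_of_eq_X_mul_C_mul_map (sigma R 1) g ?_)
  rw [map_sub]
  linear_combination hH - Eser_eq R g e

lemma constantCoeff_map_Eser (φ : QS R →+* QS R) (g e : QS R) :
    PowerSeries.constantCoeff (PowerSeries.map φ (Eser R g e)) = 0 := by
  rw [← PowerSeries.coeff_zero_eq_constantCoeff_apply, PowerSeries.coeff_map]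
  simp [Eser]

theorem bousquet_melou_lemma (e f g : QS R) (F : PowerSeries (QS R))
    (hF : F = PowerSeries.X * PowerSeries.C e
        + PowerSeries.X * PowerSeries.C f * PowerSeries.map (subS R 1) F
        + PowerSeries.X * PowerSeries.C g * PowerSeries.map (sigma R 1) F) :
    F = (Eser R g e
          + PowerSeries.map (subS R 1) (Eser R g e) * Eser R g f
          - Eser R g e * PowerSeries.map (subS R 1) (Eser R g f))
        * PowerSeries.invOfUnit (1 - PowerSeries.map (subS R 1) (Eser R g f)) 1 := by
  set F1 := PowerSeries.map (subS R 1) F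
  set G1 := PowerSeries.map (subS R 1) (Eser R g f)
  set u := PowerSeries.invOfUnit (1 - G1) 1
  have hFE : F - Eser R g f * F1 = Eser R g e := by
    refine eq_Eser_of_eq R g e ?_
    have hσF1 : PowerSeries.map (sigma R 1) F1 = F1 := map_subS_map_subS_one R _ F
    rw [map_sub, map_mul, hσF1]
    linear_combination hF - F1 * Eser_eq R g f
  have hF1 : (1 - G1) * F1 = PowerSeries.map (subS R 1) (Eser R g e) := by
    rw [← hFE, map_sub, map_mul, map_subS_map_subS_one R]
    ring
  have hu : (1 - G1) * u = 1 := PowerSeries.mul_invOfUnit _ _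
    (by simp [G1, constantCoeff_map_Eser])
  linear_combination hFE + Eser R g f * u * hF1 - (Eser R g f * F1 + Eser R g e) * hu

end
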